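/- arXiv:2605.29191 — 6 statements merged into one kernel-verified Lean document; each statement's English description precedes it below -/
import Mathlib

section
/- Let R ∈ SO(d) and let p̃_i, p̃_j, p̃_k ∈ ℝ^d be nominal positions. Define W_{jk} = diag(Rᵀ(p̃_j − p̃_k))Rᵀ and W_{ki} = diag(Rᵀ(p̃_k − p̃_i))Rᵀ. Then the constraint W_{jk}(p_i − p_k) + W_{ki}(p_j − p_k) = 0 is satisfied whenever p_l = R diag(s) Rᵀ p̃_l + τ for all l ∈ {i,j,k}, for any s, τ ∈ ℝ^d. In particular the constraint is invariant under common translation and non-uniform scaling of the points. -/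
open Matrix

/-- Invariance of the matrix-valued triplet constraint under translation and
non-uniform scaling: if each point is obtained from its nominal position via
`x ↦ R diag(s) Rᵀ x + τ`, the constraint holds. -/
theorem stmt_1 (d : ℕ) (R : Matrix (Fin d) (Fin d) ℝ)
    (hR : Rᵀ * R = 1) (hdet : R.det = 1)
    (pti ptj ptk : Fin d → ℝ) (s τ : Fin d → ℝ)
    (pi pj pk : Fin d → ℝ)
    (hpi : pi = (R * Matrix.diagonal s * Rᵀ).mulVec pti + τ)
    (hpj : pj = (R * Matrix.diagonal s * Rᵀ).mulVec ptj + τ)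
    (hpk : pk = (R * Matrix.diagonal s * Rᵀ).mulVec ptk + τ) :
    (Matrix.diagonal (Rᵀ.mulVec (ptj - ptk)) * Rᵀ).mulVec (pi - pk)
      + (Matrix.diagonal (Rᵀ.mulVec (ptk - pti)) * Rᵀ).mulVec (pj - pk) = 0 := by
  have h1 : pi - pk = (R * Matrix.diagonal s * Rᵀ).mulVec (pti - ptk) := by
    rw [hpi, hpk, Matrix.mulVec_sub]; abel
  have h2 : pj - pk = (R * Matrix.diagonal s * Rᵀ).mulVec (ptj - ptk) := by
    rw [hpj, hpk, Matrix.mulVec_sub]; abel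
  have key : ∀ a : Fin d → ℝ, Matrix.diagonal a * Rᵀ * (R * Matrix.diagonal s * Rᵀ)
      = Matrix.diagonal (a * s) * Rᵀ := by
    intro a
    calc Matrix.diagonal a * Rᵀ * (R * Matrix.diagonal s * Rᵀ)
        = Matrix.diagonal a * (Rᵀ * R) * (Matrix.diagonal s * Rᵀ) := by
          simp only [Matrix.mul_assoc]
      _ = Matrix.diagonal (a * s) * Rᵀ := by
          rw [hR, mul_one, ← Matrix.mul_assoc, Matrix.diagonal_mul_diagonal]; rfl
  rw [h1, h2, Matrix.mulVec_mulVec, Matrix.mulVec_mulVec, key, key,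
    ← Matrix.mulVec_mulVec, ← Matrix.mulVec_mulVec]
  funext m
  simp only [Pi.add_apply, Pi.zero_apply, Matrix.mulVec_diagonal, Matrix.mulVec_sub,
    Pi.mul_apply, Pi.sub_apply]
  ring
end

section
/- Let L_ff = [L₁ L₂; L₂ᵀ L_jj] be a symmetric positive definite block matrix, let W₁ be a d×d matrix, and let W, D be invertible d×d matrices with D ≻ 0 and W invertible. Then the extended matrix [L₁, L₂, 0; L₂ᵀ, L_jj + W₁ᵀDW₁, −W₁ᵀDW; 0, −WᵀDW₁, WᵀDW] is positive definite. -/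
/-!
With `y = W₁ x₂ - W x₃`, the quadratic form of the extended matrix at `(x₁, x₂, x₃)` is
`(x₁, x₂)ᵀ L_ff (x₁, x₂) + yᵀ D y`. So the extended matrix is congruent to the block-diagonal
matrix `diag(L_ff, D)` through the invertible block-triangular change of variables
`(x₁, x₂, x₃) ↦ (x₁, x₂, y)`, and congruence preserves positive definiteness.
-/

open Matrix

namespace Matrix

variable {l m n R : Type*} [Fintype m] [Fintype n]

theorem PosDef.fromBlocks_zero [CommRing R] [PartialOrder R] [StarRing R] [StarOrderedRing R]
    {A : Matrix m m R} {D : Matrix n n R} (hA : A.PosDef) (hD : D.PosDef) :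
    (fromBlocks A 0 0 D).PosDef := by
  refine .of_dotProduct_mulVec_pos (hA.1.fromBlocks (by simp) hD.1) fun x hx => ?_
  obtain ⟨u, v, rfl⟩ : ∃ u v, x = Sum.elim u v := ⟨_, _, (Sum.elim_comp_inl_inr x).symm⟩
  simp only [fromBlocks_mulVec, Sum.elim_comp_inl, Sum.elim_comp_inr, zero_mulVec, add_zero,
    zero_add, Function.star_sumElim, sumElim_dotProduct_sumElim]
  by_cases hu : u = 0
  · have hv : v ≠ 0 := by rintro rfl; exact hx (by rw [hu]; simp)
    exact add_pos_of_nonneg_of_pos (hA.posSemidef.dotProduct_mulVec_nonneg u)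
      (hD.dotProduct_mulVec_pos hv)
  · exact add_pos_of_pos_of_nonneg (hA.dotProduct_mulVec_pos hu)
      (hD.posSemidef.dotProduct_mulVec_nonneg v)

omit [Fintype m] [Fintype n] in
theorem fromBlocks_fromBlocks_zero_submatrix_sumAssoc_symm [Zero R]
    (A : Matrix l l R) (B : Matrix l m R) (D : Matrix m m R) (E : Matrix n n R) :
    (fromBlocks (fromBlocks A B Bᵀ D) 0 0 E).submatrix (Equiv.sumAssoc l m n).symm
        (Equiv.sumAssoc l m n).symm =
      fromBlocks A (fromCols B 0) (fromCols B 0)ᵀ (fromBlocks D 0 0 E) := by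
  ext (i | j | k) (i' | j' | k') <;> rfl

theorem unitriangular_transpose_mul_fromBlocks_mul_unitriangular [CommRing R] [Fintype l]
    [DecidableEq l] [DecidableEq m]
    (L₁ : Matrix l l R) (L₂ : Matrix l m R) (Ljj : Matrix m m R) (W₁ : Matrix n m R)
    (W D : Matrix n n R) :
    (fromBlocks 1 0 0 (fromBlocks 1 0 W₁ (-W)))ᵀ *
        fromBlocks L₁ (fromCols L₂ 0) (fromCols L₂ 0)ᵀ (fromBlocks Ljj 0 0 D) *
        fromBlocks 1 0 0 (fromBlocks 1 0 W₁ (-W)) =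
      fromBlocks L₁ (fromCols L₂ 0) (fromCols L₂ 0)ᵀ
        (fromBlocks (Ljj + W₁ᵀ * D * W₁) (-(W₁ᵀ * D * W)) (-(Wᵀ * D * W₁)) (Wᵀ * D * W)) := by
  simp [fromBlocks_transpose, fromBlocks_multiply, transpose_fromCols, fromCols_mul_fromBlocks,
    fromBlocks_mul_fromRows, Matrix.mul_assoc]

end Matrix

theorem stmt_8_general (a d : ℕ)
    (L₁ : Matrix (Fin a) (Fin a) ℝ) (L₂ : Matrix (Fin a) (Fin d) ℝ)
    (Ljj : Matrix (Fin d) (Fin d) ℝ)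
    (hLff : (Matrix.fromBlocks L₁ L₂ L₂ᵀ Ljj).PosDef)
    (W₁ W D : Matrix (Fin d) (Fin d) ℝ)
    (hD : D.PosDef) (hW : IsUnit W) :
    (Matrix.fromBlocks L₁
      (Matrix.of fun i (c : Fin d ⊕ Fin d) => Sum.elim (L₂ i) (fun _ => (0 : ℝ)) c)
      (Matrix.of fun i (c : Fin d ⊕ Fin d) => Sum.elim (L₂ i) (fun _ => (0 : ℝ)) c)ᵀ
      (Matrix.fromBlocks (Ljj + W₁ᵀ * D * W₁) (-(W₁ᵀ * D * W))
        (-(Wᵀ * D * W₁)) (Wᵀ * D * W))).PosDef := by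
  set G : Matrix (Fin a ⊕ (Fin d ⊕ Fin d)) (Fin a ⊕ (Fin d ⊕ Fin d)) ℝ :=
    fromBlocks 1 0 0 (fromBlocks 1 0 W₁ (-W))
  have hG : IsUnit G := by simp [G, hW]
  have hN := (hLff.fromBlocks_zero hD).submatrix
    (Equiv.sumAssoc (Fin a) (Fin d) (Fin d)).symm.injective
  rw [fromBlocks_fromBlocks_zero_submatrix_sumAssoc_symm] at hN
  have := (IsUnit.posDef_star_left_conjugate_iff hG).2 hN
  rwa [star_eq_conjTranspose, conjTranspose_eq_transpose_of_trivial,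
    unitriangular_transpose_mul_fromBlocks_mul_unitriangular] at this

/-- Case 2 of Theorem 1: adding a new agent connected to one leader and one
follower `j` preserves positive definiteness of the follower block. -/
theorem stmt_8 (a d : ℕ)
    (L₁ : Matrix (Fin a) (Fin a) ℝ) (L₂ : Matrix (Fin a) (Fin d) ℝ)
    (Ljj : Matrix (Fin d) (Fin d) ℝ)
    (hL₁ : L₁.IsSymm) (hLjj : Ljj.IsSymm)
    (hLff : (Matrix.fromBlocks L₁ L₂ L₂ᵀ Ljj).PosDef)
    (W₁ W D : Matrix (Fin d) (Fin d) ℝ)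
    (hD : D.PosDef) (hW : IsUnit W) :
    (Matrix.fromBlocks L₁
      (Matrix.of fun i (c : Fin d ⊕ Fin d) => Sum.elim (L₂ i) (fun _ => (0 : ℝ)) c)
      (Matrix.of fun i (c : Fin d ⊕ Fin d) => Sum.elim (L₂ i) (fun _ => (0 : ℝ)) c)ᵀ
      (Matrix.fromBlocks (Ljj + W₁ᵀ * D * W₁) (-(W₁ᵀ * D * W))
        (-(Wᵀ * D * W₁)) (Wᵀ * D * W))).PosDef :=
  stmt_8_general a d L₁ L₂ Ljj hLff W₁ W D hD hW
end

section
/- Let L be a symmetric dn×dn matrix with L ⪰ 0, ker(L) = Π(p̃), and follower block L_ff ≻ 0. Let v be a new agent connected to two existing agents i, j such that W_vv = diag(Rᵀ(p̃_j − p̃_i))Rᵀ is invertible, and set L⁺ = L_pad + M_pad, where M_pad embeds Mᵀ D M for M = [W_jv, W_vi, −W_vv] and D ≻ 0 diagonal into the coordinates of (i, j, v). Then rank(L⁺) = rank(L) + d. -/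
open Matrix Kronecker

/-- The configuration obtained from the nominal one by non-uniform scaling `s`
(in the frame `R`) and translation `τ`. -/
noncomputable def nsParam (d k : ℕ) (R : Matrix (Fin d) (Fin d) ℝ)
    (q : Fin k × Fin d → ℝ) (s τ : Fin d → ℝ) : Fin k × Fin d → ℝ :=
  ((1 : Matrix (Fin k) (Fin k) ℝ) ⊗ₖ (R * Matrix.diagonal s * Rᵀ)).mulVec q
    + fun x => τ x.2

/-- The translation plus non-uniform scaling shape space. -/
def nsShape (d k : ℕ) (R : Matrix (Fin d) (Fin d) ℝ)
    (q : Fin k × Fin d → ℝ) : Set (Fin k × Fin d → ℝ) :=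
  {p | ∃ s τ : Fin d → ℝ, p = nsParam d k R q s τ}

/-- The matrix-valued edge weight `diag(Rᵀ(x − y))Rᵀ`. -/
def nsWeight (d : ℕ) (R : Matrix (Fin d) (Fin d) ℝ) (x y : Fin d → ℝ) :
    Matrix (Fin d) (Fin d) ℝ :=
  Matrix.diagonal (Rᵀ.mulVec (x - y)) * Rᵀ

/-- The padded constraint row block `[… W_jv … W_vi … | −W_vv]` for the
triplet `(i, j, v)`, acting on the extended coordinates. -/
def constraintBlock (d n : ℕ) (i j : Fin n)
    (Wjv Wvi : Matrix (Fin d) (Fin d) ℝ) :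
    Matrix (Fin d) ((Fin n × Fin d) ⊕ Fin d) ℝ :=
  Matrix.of fun r c =>
    Sum.elim
      (fun q : Fin n × Fin d =>
        if q.1 = i then Wjv r q.2 else if q.1 = j then Wvi r q.2 else 0)
      (fun k => -(Wjv + Wvi) r k) c

/-!
Write the new constraint row as `C = [B | W]` with `W = −W_vv` invertible (the weights
telescope: `W_jv + W_vi = W_vv`). The unipotent change of coordinates `P = [[1, 0], [−W⁻¹B, 1]]`
clears `B`, `C P = [0 | W]`, and fixes the padded block `L_pad` from both sides, so
`Pᵀ L⁺ P = diag(L, Wᵀ D W)`. The second block is invertible, hence `rank L⁺ = rank L + d`.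
-/

namespace Submodule

variable {R M N : Type*} [Semiring R] [AddCommMonoid M] [Module R M] [AddCommMonoid N] [Module R N]

def prodEquiv (p : Submodule R M) (q : Submodule R N) : p.prod q ≃ₗ[R] p × q where
  toFun x := (⟨x.1.1, x.2.1⟩, ⟨x.1.2, x.2.2⟩)
  invFun y := ⟨(y.1, y.2), y.1.2, y.2.2⟩
  map_add' _ _ := rfl
  map_smul' _ _ := rfl
  left_inv _ := rfl
  right_inv _ := rfl

end Submodule

namespace Matrix

variable {K : Type*} [Field K] {m n : Type*} [Fintype m] [Fintype n]

theorem rank_fromBlocks_zero_zero (A : Matrix m m K) (D : Matrix n n K) :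
    (fromBlocks A 0 0 D).rank = A.rank + D.rank := by
  let e := LinearEquiv.sumArrowLequivProdArrow m n K K
  have h : (fromBlocks A 0 0 D).mulVecLin
      = e.symm.toLinearMap ∘ₗ A.mulVecLin.prodMap D.mulVecLin ∘ₗ e.toLinearMap := by
    refine LinearMap.ext fun v => ?_
    rw [← Sum.elim_comp_inl_inr v]
    ext (i | i) <;> simp [e, fromBlocks_mulVec] <;> rfl
  rw [rank, h, LinearMap.range_comp, LinearMap.range_comp_of_range_eq_top _ e.range,
    LinearEquiv.finrank_map_eq, LinearMap.range_prodMap,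
    (Submodule.prodEquiv _ _).finrank_eq, Module.finrank_prod]
  rfl

variable [DecidableEq m] [DecidableEq n]

theorem rank_fromBlocks_add_transpose_mul_mul_fromCols (L : Matrix m m K) (B : Matrix n m K)
    {W D : Matrix n n K} (hW : IsUnit W) (hD : IsUnit D) :
    (fromBlocks L 0 0 0 + (fromCols B W)ᵀ * D * fromCols B W).rank
      = L.rank + Fintype.card n := by
  set P : Matrix (m ⊕ n) (m ⊕ n) K := fromBlocks 1 0 (-(W⁻¹ * B)) 1
  have hP : IsUnit P.det := by simp [P]
  have hCP : fromCols B W * P = fromCols 0 W := by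
    simp [P, fromCols_mul_fromBlocks, ← Matrix.mul_assoc,
      mul_nonsing_inv W ((isUnit_iff_isUnit_det W).mp hW)]
  have hLP : fromBlocks L 0 0 0 * P = fromBlocks L 0 0 0 := by
    simp [P, fromBlocks_multiply]
  have hPL : Pᵀ * fromBlocks L 0 0 0 = fromBlocks L 0 0 0 := by
    simp [P, fromBlocks_transpose, fromBlocks_multiply]
  have hblockDiag : Pᵀ * (fromBlocks L 0 0 0 + (fromCols B W)ᵀ * D * fromCols B W) * P
      = fromBlocks L 0 0 (Wᵀ * D * W) := by
    rw [Matrix.mul_add, Matrix.add_mul, Matrix.mul_assoc, hLP, hPL, ← Matrix.mul_assoc,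
      ← Matrix.mul_assoc, ← transpose_mul, Matrix.mul_assoc _ _ P, hCP]
    ext (_ | _) (_ | _) <;> simp [transpose_fromCols]
  calc _ = (Pᵀ * (fromBlocks L 0 0 0 + (fromCols B W)ᵀ * D * fromCols B W) * P).rank := by
        rw [rank_mul_eq_left_of_isUnit_det _ _ hP,
          rank_mul_eq_right_of_isUnit_det _ _ (by rwa [det_transpose])]
    _ = L.rank + Fintype.card n := by
        rw [hblockDiag, rank_fromBlocks_zero_zero,
          rank_of_isUnit _ (((W.isUnit_transpose.mpr hW).mul hD).mul hW)]

end Matrix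

theorem nsWeight_add (d : ℕ) (R : Matrix (Fin d) (Fin d) ℝ) (x y z : Fin d → ℝ) :
    nsWeight d R x y + nsWeight d R y z = nsWeight d R x z := by
  rw [nsWeight, nsWeight, nsWeight, ← add_mul, ← sub_add_sub_cancel x y z, mulVec_add,
    diagonal_add]
  rfl

theorem constraintBlock_eq_fromCols (d n : ℕ) (i j : Fin n)
    (Wjv Wvi : Matrix (Fin d) (Fin d) ℝ) :
    constraintBlock d n i j Wjv Wvi
      = fromCols (of fun r (q : Fin n × Fin d) =>
          if q.1 = i then Wjv r q.2 else if q.1 = j then Wvi r q.2 else 0) (-(Wjv + Wvi)) :=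
  rfl

theorem stmt_14_general (d n : ℕ)
    (R : Matrix (Fin d) (Fin d) ℝ)
    (pt : Fin n × Fin d → ℝ) (ptv : Fin d → ℝ)
    (L : Matrix (Fin n × Fin d) (Fin n × Fin d) ℝ)
    (i j : Fin n)
    (hWvv : IsUnit (nsWeight d R (fun k => pt (j, k)) (fun k => pt (i, k))))
    (dv : Fin d → ℝ) (hdv : ∀ r, 0 < dv r) :
    (Matrix.fromBlocks L 0 0 (0 : Matrix (Fin d) (Fin d) ℝ)
      + (constraintBlock d n i j
            (nsWeight d R (fun k => pt (j, k)) ptv)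
            (nsWeight d R ptv (fun k => pt (i, k))))ᵀ
          * Matrix.diagonal dv
          * constraintBlock d n i j
              (nsWeight d R (fun k => pt (j, k)) ptv)
              (nsWeight d R ptv (fun k => pt (i, k)))).rank
      = L.rank + d := by
  have hW : IsUnit (-(nsWeight d R (fun k => pt (j, k)) ptv
      + nsWeight d R ptv (fun k => pt (i, k)))) := by
    rw [nsWeight_add]
    exact hWvv.neg
  have hD : IsUnit (diagonal dv) :=
    isUnit_diagonal.mpr (Pi.isUnit_iff.mpr fun r => (hdv r).ne'.isUnit)
  rw [constraintBlock_eq_fromCols, rank_fromBlocks_add_transpose_mul_mul_fromCols L _ hW hD,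
    Fintype.card_fin]

theorem stmt_14 (d n m : ℕ) (hm : 1 ≤ m) (hmn : m ≤ n)
    (R : Matrix (Fin d) (Fin d) ℝ) (hR : Rᵀ * R = 1) (hdet : R.det = 1)
    (pt : Fin n × Fin d → ℝ) (ptv : Fin d → ℝ)
    (L : Matrix (Fin n × Fin d) (Fin n × Fin d) ℝ)
    (hLpsd : L.PosSemidef)
    (hker : {x | L.mulVec x = 0} = nsShape d n R pt)
    (hLff : (L.submatrix
        (fun q : {a : Fin n // m ≤ (a : ℕ)} × Fin d => ((q.1 : Fin n), q.2))
        (fun q : {a : Fin n // m ≤ (a : ℕ)} × Fin d => ((q.1 : Fin n), q.2))).PosDef)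
    (i j : Fin n) (hij : i ≠ j)
    (hWvv : IsUnit (nsWeight d R (fun k => pt (j, k)) (fun k => pt (i, k))))
    (dv : Fin d → ℝ) (hdv : ∀ r, 0 < dv r) :
    (Matrix.fromBlocks L 0 0 (0 : Matrix (Fin d) (Fin d) ℝ)
      + (constraintBlock d n i j
            (nsWeight d R (fun k => pt (j, k)) ptv)
            (nsWeight d R ptv (fun k => pt (i, k))))ᵀ
          * Matrix.diagonal dv
          * constraintBlock d n i j
              (nsWeight d R (fun k => pt (j, k)) ptv)
              (nsWeight d R ptv (fun k => pt (i, k)))).rank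
      = L.rank + d :=
  stmt_14_general d n R pt ptv L i j hWvv dv hdv
end

section
/- Under the hypotheses of the agent-joining construction (L ⪰ 0, ker(L) = Π(p̃), L_ff ≻ 0, and W_vv invertible), the extended Laplacian L⁺ = L_pad + M_pad satisfies L⁺ ⪰ 0 and ker(L⁺) = Π(p̃⁺), where p̃⁺ = [p̃; p̃_v]. -/
open Matrix Kronecker

/-- The shape space of the extended formation (old agents plus the new agent),
on the coordinates `(Fin n × Fin d) ⊕ Fin d`. -/
def nsShapeExt (d n : ℕ) (R : Matrix (Fin d) (Fin d) ℝ)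
    (pt : Fin n × Fin d → ℝ) (ptv : Fin d → ℝ) :
    Set ((Fin n × Fin d) ⊕ Fin d → ℝ) :=
  {x | ∃ s τ : Fin d → ℝ,
    (∀ a : Fin n, (fun k => x (Sum.inl (a, k)))
        = (R * Matrix.diagonal s * Rᵀ).mulVec (fun k => pt (a, k)) + τ) ∧
      (fun k => x (Sum.inr k)) = (R * Matrix.diagonal s * Rᵀ).mulVec ptv + τ}

/-! Both `L_pad` and `Mᵀ D M` are positive semidefinite, so the kernel of `L⁺` is the intersection
of their kernels: the old agents must form a configuration of `Π(p̃)`, with some parameters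
`(s, τ)`, and `M x = 0`. The constraint row is built so that it vanishes on `Π(p̃⁺)`, and since
`W_vv = W_jv + W_vi` is invertible, `M x = 0` leaves the new agent no other position than
`R diag(s) Rᵀ p̃_v + τ`. -/

namespace Matrix

open scoped ComplexOrder

variable {m n 𝕜 : Type*} [Fintype m] [Fintype n] [RCLike 𝕜]

theorem PosSemidef.add_mulVec_eq_zero_iff {A B : Matrix n n 𝕜} (hA : A.PosSemidef)
    (hB : B.PosSemidef) (x : n → 𝕜) :
    (A + B) *ᵥ x = 0 ↔ A *ᵥ x = 0 ∧ B *ᵥ x = 0 := by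
  rw [← (hA.add hB).dotProduct_mulVec_zero_iff, ← hA.dotProduct_mulVec_zero_iff,
    ← hB.dotProduct_mulVec_zero_iff, add_mulVec, dotProduct_add]
  exact add_eq_zero_iff_of_nonneg (hA.dotProduct_mulVec_nonneg x) (hB.dotProduct_mulVec_nonneg x)

theorem PosSemidef.conjTranspose_mul_mul_same_mulVec_eq_zero_iff {A : Matrix m m 𝕜}
    (hA : A.PosSemidef) (B : Matrix m n 𝕜) (x : n → 𝕜) :
    (Bᴴ * A * B) *ᵥ x = 0 ↔ A *ᵥ (B *ᵥ x) = 0 := by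
  rw [← (hA.conjTranspose_mul_mul_same B).dotProduct_mulVec_zero_iff,
    ← hA.dotProduct_mulVec_zero_iff, ← mulVec_mulVec, ← mulVec_mulVec, dotProduct_mulVec,
    star_mulVec]

theorem PosSemidef.fromBlocks_zero {A : Matrix m m 𝕜} (hA : A.PosSemidef) :
    (fromBlocks A 0 0 (0 : Matrix n n 𝕜)).PosSemidef := by
  refine .of_dotProduct_mulVec_nonneg (hA.1.fromBlocks (by simp) (by simp)) fun x => ?_
  simpa [fromBlocks_mulVec, dotProduct, Fintype.sum_sum_type] using
    hA.dotProduct_mulVec_nonneg (x ∘ Sum.inl)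

theorem fromBlocks_zero_mulVec_eq_zero_iff {R : Type*} [Semiring R] (A : Matrix m m R)
    (x : m ⊕ n → R) :
    fromBlocks A 0 0 (0 : Matrix n n R) *ᵥ x = 0 ↔ A *ᵥ (x ∘ Sum.inl) = 0 := by
  simp [fromBlocks_mulVec, ← Sum.elim_zero_zero, Sum.elim_eq_iff]

end Matrix

section ShapeSpace

variable {d : ℕ} {R : Matrix (Fin d) (Fin d) ℝ}

lemma nsWeight_mulVec (x y v : Fin d → ℝ) :
    nsWeight d R x y *ᵥ v = Rᵀ *ᵥ (x - y) * Rᵀ *ᵥ v := by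
  ext k
  rw [nsWeight, ← mulVec_mulVec, mulVec_diagonal, Pi.mul_apply]

lemma transpose_mulVec_conj_diagonal_mulVec (hR : Rᵀ * R = 1) (s w : Fin d → ℝ) :
    Rᵀ *ᵥ ((R * diagonal s * Rᵀ) *ᵥ w) = s * Rᵀ *ᵥ w := by
  rw [mulVec_mulVec, ← Matrix.mul_assoc, ← Matrix.mul_assoc, hR, Matrix.one_mul,
    ← mulVec_mulVec]
  ext k
  rw [mulVec_diagonal, Pi.mul_apply]

lemma nsWeight_add_nsWeight (x y z : Fin d → ℝ) :
    nsWeight d R x y + nsWeight d R y z = nsWeight d R x z := by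
  rw [nsWeight, nsWeight, nsWeight, ← Matrix.add_mul, diagonal_add, ← sub_add_sub_cancel x y z,
    mulVec_add]
  rfl

/-- After applying `Rᵀ` both the weights and `R diag(s) Rᵀ` act by coordinatewise products, and
`(p_j - p_v) p_i + (p_v - p_i) p_j = (p_j - p_i) p_v`. -/
lemma nsWeight_mulVec_add_nsWeight_mulVec (hR : Rᵀ * R = 1) (s τ pv pi pj : Fin d → ℝ) :
    nsWeight d R pj pv *ᵥ ((R * diagonal s * Rᵀ) *ᵥ pi + τ)
      + nsWeight d R pv pi *ᵥ ((R * diagonal s * Rᵀ) *ᵥ pj + τ)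
      = nsWeight d R pj pi *ᵥ ((R * diagonal s * Rᵀ) *ᵥ pv + τ) := by
  simp only [mulVec_add, nsWeight_mulVec, transpose_mulVec_conj_diagonal_mulVec hR, mulVec_sub]
  ring

lemma constraintBlock_mulVec {n : ℕ} {i j : Fin n} (hij : i ≠ j)
    (Wjv Wvi : Matrix (Fin d) (Fin d) ℝ) (x : (Fin n × Fin d) ⊕ Fin d → ℝ) :
    constraintBlock d n i j Wjv Wvi *ᵥ x
      = Wjv *ᵥ (fun k => x (Sum.inl (i, k))) + Wvi *ᵥ (fun k => x (Sum.inl (j, k)))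
        - (Wjv + Wvi) *ᵥ (fun k => x (Sum.inr k)) := by
  ext r
  simp only [constraintBlock, mulVec, dotProduct, Fintype.sum_sum_type, Fintype.sum_prod_type,
    of_apply, Sum.elim_inl, Sum.elim_inr, Pi.add_apply, Pi.sub_apply, neg_mul,
    Finset.sum_neg_distrib, ← sub_eq_add_neg]
  rw [Fintype.sum_eq_add i j hij fun c hc => by simp [hc.1, hc.2]]
  simp [hij.symm]

lemma nsParam_apply {k : ℕ} (q : Fin k × Fin d → ℝ) (s τ : Fin d → ℝ) (a : Fin k) (l : Fin d) :
    nsParam d k R q s τ (a, l) = ((R * diagonal s * Rᵀ) *ᵥ fun c => q (a, c)) l + τ l := by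
  simp [nsParam, mulVec, dotProduct, Fintype.sum_prod_type, one_apply, ite_mul]

lemma mem_nsShape_iff {k : ℕ} (q p : Fin k × Fin d → ℝ) :
    p ∈ nsShape d k R q ↔ ∃ s τ : Fin d → ℝ, ∀ a : Fin k,
      (fun l => p (a, l)) = (R * diagonal s * Rᵀ) *ᵥ (fun l => q (a, l)) + τ := by
  simp only [nsShape, Set.mem_ofPred_eq, funext_iff, Prod.forall, nsParam_apply, Pi.add_apply]

theorem mem_nsShapeExt_iff {n : ℕ} (hR : Rᵀ * R = 1) (pt : Fin n × Fin d → ℝ)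
    (ptv : Fin d → ℝ) {i j : Fin n} (hij : i ≠ j)
    (hW : IsUnit (nsWeight d R (fun k => pt (j, k)) (fun k => pt (i, k))))
    (x : (Fin n × Fin d) ⊕ Fin d → ℝ) :
    x ∈ nsShapeExt d n R pt ptv ↔ x ∘ Sum.inl ∈ nsShape d n R pt ∧
      constraintBlock d n i j (nsWeight d R (fun k => pt (j, k)) ptv)
        (nsWeight d R ptv (fun k => pt (i, k))) *ᵥ x = 0 := by
  rw [mem_nsShape_iff, constraintBlock_mulVec hij, nsWeight_add_nsWeight, sub_eq_zero]
  constructor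
  · rintro ⟨s, τ, hold, hv⟩
    refine ⟨⟨s, τ, hold⟩, ?_⟩
    rw [hold i, hold j, hv, nsWeight_mulVec_add_nsWeight_mulVec hR]
  · rintro ⟨⟨s, τ, hold⟩, hM⟩
    simp only [Function.comp_apply] at hold
    refine ⟨s, τ, hold, mulVec_injective_of_isUnit hW ?_⟩
    rw [← hM, hold i, hold j, nsWeight_mulVec_add_nsWeight_mulVec hR]

end ShapeSpace

theorem stmt_15_general (d n : ℕ)
    (R : Matrix (Fin d) (Fin d) ℝ) (hR : Rᵀ * R = 1)
    (pt : Fin n × Fin d → ℝ) (ptv : Fin d → ℝ)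
    (L : Matrix (Fin n × Fin d) (Fin n × Fin d) ℝ)
    (hLpsd : L.PosSemidef)
    (hker : {x | L.mulVec x = 0} = nsShape d n R pt)
    (i j : Fin n) (hij : i ≠ j)
    (hWvv : IsUnit (nsWeight d R (fun k => pt (j, k)) (fun k => pt (i, k))))
    (dv : Fin d → ℝ) (hdv : ∀ r, 0 < dv r) :
    (Matrix.fromBlocks L 0 0 (0 : Matrix (Fin d) (Fin d) ℝ)
      + (constraintBlock d n i j
            (nsWeight d R (fun k => pt (j, k)) ptv)
            (nsWeight d R ptv (fun k => pt (i, k))))ᵀ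
          * Matrix.diagonal dv
          * constraintBlock d n i j
              (nsWeight d R (fun k => pt (j, k)) ptv)
              (nsWeight d R ptv (fun k => pt (i, k)))).PosSemidef ∧
    {x | (Matrix.fromBlocks L 0 0 (0 : Matrix (Fin d) (Fin d) ℝ)
      + (constraintBlock d n i j
            (nsWeight d R (fun k => pt (j, k)) ptv)
            (nsWeight d R ptv (fun k => pt (i, k))))ᵀ
          * Matrix.diagonal dv
          * constraintBlock d n i j
              (nsWeight d R (fun k => pt (j, k)) ptv)
              (nsWeight d R ptv (fun k => pt (i, k)))).mulVec x = 0}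
      = nsShapeExt d n R pt ptv := by
  set M := constraintBlock d n i j (nsWeight d R (fun k => pt (j, k)) ptv)
    (nsWeight d R ptv (fun k => pt (i, k)))
  have hD : (diagonal dv).PosDef := posDef_diagonal_iff.mpr hdv
  have hLpad : (fromBlocks L 0 0 (0 : Matrix (Fin d) (Fin d) ℝ)).PosSemidef :=
    hLpsd.fromBlocks_zero
  have hQ : (Mᴴ * diagonal dv * M).PosSemidef := hD.posSemidef.conjTranspose_mul_mul_same M
  rw [conjTranspose_eq_transpose_of_trivial] at hQ
  refine ⟨hLpad.add hQ, Set.ext fun x => ?_⟩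
  rw [Set.mem_ofPred_eq, hLpad.add_mulVec_eq_zero_iff hQ, fromBlocks_zero_mulVec_eq_zero_iff,
    ← conjTranspose_eq_transpose_of_trivial,
    hD.posSemidef.conjTranspose_mul_mul_same_mulVec_eq_zero_iff,
    (mulVec_injective_of_isUnit hD.isUnit).eq_iff' (mulVec_zero _),
    mem_nsShapeExt_iff hR pt ptv hij hWvv, ← hker]
  rfl

theorem stmt_15 (d n m : ℕ) (hm : 1 ≤ m) (hmn : m ≤ n)
    (R : Matrix (Fin d) (Fin d) ℝ) (hR : Rᵀ * R = 1) (hdet : R.det = 1)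
    (pt : Fin n × Fin d → ℝ) (ptv : Fin d → ℝ)
    (L : Matrix (Fin n × Fin d) (Fin n × Fin d) ℝ)
    (hLpsd : L.PosSemidef)
    (hker : {x | L.mulVec x = 0} = nsShape d n R pt)
    (hLff : (L.submatrix
        (fun q : {a : Fin n // m ≤ (a : ℕ)} × Fin d => ((q.1 : Fin n), q.2))
        (fun q : {a : Fin n // m ≤ (a : ℕ)} × Fin d => ((q.1 : Fin n), q.2))).PosDef)
    (i j : Fin n) (hij : i ≠ j)
    (hWvv : IsUnit (nsWeight d R (fun k => pt (j, k)) (fun k => pt (i, k))))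
    (dv : Fin d → ℝ) (hdv : ∀ r, 0 < dv r) :
    (Matrix.fromBlocks L 0 0 (0 : Matrix (Fin d) (Fin d) ℝ)
      + (constraintBlock d n i j
            (nsWeight d R (fun k => pt (j, k)) ptv)
            (nsWeight d R ptv (fun k => pt (i, k))))ᵀ
          * Matrix.diagonal dv
          * constraintBlock d n i j
              (nsWeight d R (fun k => pt (j, k)) ptv)
              (nsWeight d R ptv (fun k => pt (i, k)))).PosSemidef ∧
    {x | (Matrix.fromBlocks L 0 0 (0 : Matrix (Fin d) (Fin d) ℝ)
      + (constraintBlock d n i j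
            (nsWeight d R (fun k => pt (j, k)) ptv)
            (nsWeight d R ptv (fun k => pt (i, k))))ᵀ
          * Matrix.diagonal dv
          * constraintBlock d n i j
              (nsWeight d R (fun k => pt (j, k)) ptv)
              (nsWeight d R ptv (fun k => pt (i, k)))).mulVec x = 0}
      = nsShapeExt d n R pt ptv :=
  stmt_15_general d n R hR pt ptv L hLpsd hker i j hij hWvv dv hdv
end

section
/- Let S = [C + NᵀDN, −NᵀDW; −WᵀDN, WᵀDW] with C ≻ 0 (size 2d), W invertible, D ≻ 0, N of size d×2d. Then S is invertible and the top-left 2d×2d block of S⁻¹ equals C⁻¹. -/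
open Matrix

/-- Key identity in the proof of Theorem 1: the top-left block of the inverse
of `S = [C + NᵀDN, −NᵀDW; −WᵀDN, WᵀDW]` equals `C⁻¹`. -/
theorem stmt_17 (d : ℕ)
    (C : Matrix (Fin (2 * d)) (Fin (2 * d)) ℝ) (hC : C.PosDef)
    (N : Matrix (Fin d) (Fin (2 * d)) ℝ)
    (W D : Matrix (Fin d) (Fin d) ℝ)
    (hW : IsUnit W) (hD : D.PosDef) :
    IsUnit (Matrix.fromBlocks (C + Nᵀ * D * N) (-(Nᵀ * D * W))
      (-(Wᵀ * D * N)) (Wᵀ * D * W)) ∧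
    ((Matrix.fromBlocks (C + Nᵀ * D * N) (-(Nᵀ * D * W))
      (-(Wᵀ * D * N)) (Wᵀ * D * W))⁻¹).toBlocks₁₁ = C⁻¹ := by
  letI := hW.nonempty_invertible.some
  letI : Invertible Wᵀ := W.invertibleTranspose
  letI : Invertible D := hD.isUnit.nonempty_invertible.some
  letI : Invertible (Wᵀ * D * W) := Invertible.mul (Invertible.mul ‹_› ‹_›) ‹_›
  letI : Invertible C := hC.isUnit.nonempty_invertible.some
  have hinv : ⅟ (Wᵀ * D * W) = ⅟W * ⅟D * ⅟Wᵀ := by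
    apply invOf_eq_right_inv
    calc Wᵀ * D * W * (⅟W * ⅟D * ⅟Wᵀ)
        = Wᵀ * D * (W * ⅟W) * ⅟D * ⅟Wᵀ := by noncomm_ring
      _ = 1 := by simp [Matrix.mul_assoc]
  have hschur : C + Nᵀ * D * N - -(Nᵀ * D * W) * ⅟(Wᵀ * D * W) * -(Wᵀ * D * N) = C := by
    rw [hinv]
    have : Nᵀ * D * W * (⅟W * ⅟D * ⅟Wᵀ) * (Wᵀ * D * N) = Nᵀ * D * N := by
      calc Nᵀ * D * W * (⅟W * ⅟D * ⅟Wᵀ) * (Wᵀ * D * N)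
          = Nᵀ * D * (W * ⅟W) * (⅟D * (⅟Wᵀ * Wᵀ) * D) * N := by
            simp only [Matrix.mul_assoc]
        _ = Nᵀ * D * N := by simp [Matrix.mul_assoc]
    rw [Matrix.neg_mul, Matrix.mul_neg, Matrix.neg_mul, neg_neg, this]
    abel
  letI : Invertible (C + Nᵀ * D * N - -(Nᵀ * D * W) * ⅟(Wᵀ * D * W) * -(Wᵀ * D * N)) :=
    ‹Invertible C›.copy _ hschur
  letI iS := fromBlocks₂₂Invertible (C + Nᵀ * D * N) (-(Nᵀ * D * W)) (-(Wᵀ * D * N)) (Wᵀ * D * W)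
  refine ⟨isUnit_of_invertible _, ?_⟩
  rw [← invOf_eq_nonsing_inv, invOf_fromBlocks₂₂_eq, toBlocks_fromBlocks₁₁,
    ← invOf_eq_nonsing_inv]
  congr 1
end

section
/- Let L_P1, L_P2, C be real matrices with [L_P1, L_P2; L_P2ᵀ, C] ≻ 0, and let S ≻ 0 be a larger symmetric matrix whose top-left block of S⁻¹ equals C⁻¹. Then the block matrix [L_P1, (L_P2, 0); (L_P2, 0)ᵀ, S] is positive definite. -/
open Matrix

/-
Write `B = (L_P2, 0)`. As `B` vanishes outside the first block of columns and `S⁻¹` has top-left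
block `C⁻¹`, `B S⁻¹ Bᵀ = L_P2 C⁻¹ L_P2ᵀ`: the new block matrix has, with respect to `S`, the same
Schur complement `L_P1 - L_P2 C⁻¹ L_P2ᵀ` as the given one with respect to `C`. A Hermitian block
matrix with positive definite bottom-right block `D` is positive definite iff its Schur complement
is: semidefiniteness transfers through the quadratic form, and invertibility through
`det (fromBlocks A B Bᴴ D) = det D * det (A - B D⁻¹ Bᴴ)`.
-/

namespace Matrix

open scoped ComplexOrder in
theorem posDef_fromBlocks₂₂_iff {m n 𝕜 : Type*} [Fintype m] [Fintype n] [DecidableEq m]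
    [DecidableEq n] [RCLike 𝕜] (A : Matrix m m 𝕜) (B : Matrix m n 𝕜) {D : Matrix n n 𝕜}
    (hD : D.PosDef) :
    (fromBlocks A B Bᴴ D).PosDef ↔ (A - B * D⁻¹ * Bᴴ).PosDef := by
  let _ : Invertible D := hD.isUnit.invertible
  have hdet : (fromBlocks A B Bᴴ D).det = D.det * (A - B * D⁻¹ * Bᴴ).det := by
    rw [det_fromBlocks₂₂, invOf_eq_nonsing_inv]
  constructor
  · intro h
    rw [((PosDef.fromBlocks₂₂ A B hD).mp h.posSemidef).posDef_iff_det_ne_zero]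
    exact right_ne_zero_of_mul (hdet ▸ h.det_pos.ne')
  · intro h
    rw [((PosDef.fromBlocks₂₂ A B hD).mpr h.posSemidef).posDef_iff_det_ne_zero, hdet]
    exact mul_ne_zero hD.det_pos.ne' h.det_pos.ne'

theorem fromCols_zero_mul_mul_conjTranspose {m n₁ n₂ R : Type*} [Fintype n₁] [Fintype n₂]
    [Semiring R] [StarRing R] (B : Matrix m n₁ R) (M : Matrix (n₁ ⊕ n₂) (n₁ ⊕ n₂) R) :
    fromCols B (0 : Matrix m n₂ R) * M * (fromCols B (0 : Matrix m n₂ R))ᴴ =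
      B * M.toBlocks₁₁ * Bᴴ := by
  rw [← fromBlocks_toBlocks M, fromCols_mul_fromBlocks,
    conjTranspose_fromCols_eq_fromRows_conjTranspose, fromCols_mul_fromRows]
  simp

end Matrix

theorem stmt_18 (a c e : ℕ)
    (LP1 : Matrix (Fin a) (Fin a) ℝ) (LP2 : Matrix (Fin a) (Fin c) ℝ)
    (C : Matrix (Fin c) (Fin c) ℝ)
    (hpos : (Matrix.fromBlocks LP1 LP2 LP2ᵀ C).PosDef)
    (S : Matrix (Fin c ⊕ Fin e) (Fin c ⊕ Fin e) ℝ)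
    (hS : S.PosDef) (hS11 : (S⁻¹).toBlocks₁₁ = C⁻¹) :
    (Matrix.fromBlocks LP1
      (Matrix.of fun i (q : Fin c ⊕ Fin e) => Sum.elim (LP2 i) (fun _ => (0 : ℝ)) q)
      (Matrix.of fun i (q : Fin c ⊕ Fin e) => Sum.elim (LP2 i) (fun _ => (0 : ℝ)) q)ᵀ
      S).PosDef := by
  rw [← conjTranspose_eq_transpose_of_trivial] at hpos
  have hC : C.PosDef := hpos.submatrix Sum.inr_injective
  have hschur : (LP1 - LP2 * C⁻¹ * LP2ᴴ).PosDef := (posDef_fromBlocks₂₂_iff _ _ hC).mp hpos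
  change (fromBlocks LP1 (fromCols LP2 0) (fromCols LP2 0)ᵀ S).PosDef
  rwa [← conjTranspose_eq_transpose_of_trivial, posDef_fromBlocks₂₂_iff _ _ hS,
    fromCols_zero_mul_mul_conjTranspose, hS11]
end
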